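/- arXiv:1806.03607 — 9 statements merged into one kernel-verified Lean document; each statement's English description precedes it below -/
import Mathlib

section
/- Let ρ₀₀, ρ₀₁, ρ₁₀, ρ₁₁, r be real numbers such that for each j ∈ {0,1} the 2×2 matrix [[1 - ρ₁ⱼ², r - ρ₀ⱼρ₁ⱼ], [r - ρ₀ⱼρ₁ⱼ, 1 - ρ₀ⱼ²]] is positive semidefinite. Then |ρ₀₀ρ₁₀ - ρ₀₁ρ₁₁| ≤ √((1 - ρ₀₀²)(1 - ρ₁₀²)) + √((1 - ρ₀₁²)(1 - ρ₁₁²)). -/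
/-! The Schur-complement condition for `j` says that `r` lies within `√((1 - ρ₀ⱼ²)(1 - ρ₁ⱼ²))`
of `ρ₀ⱼ ρ₁ⱼ`; since the same `r` serves both `j`, the triangle inequality through `r` bounds the
distance between `ρ₀₀ ρ₁₀` and `ρ₀₁ ρ₁₁`. -/

lemma Matrix.PosSemidef.abs_le_sqrt_mul_fin_two {a b c : ℝ} (h : (!![a, b; b, c]).PosSemidef) :
    |b| ≤ √(c * a) := by
  have hdet := h.det_nonneg
  rw [Matrix.det_fin_two_of] at hdet
  exact Real.abs_le_sqrt (by nlinarith)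

theorem stmt_1 (ρ : Fin 2 → Fin 2 → ℝ) (r : ℝ)
    (h : ∀ j : Fin 2,
      (!![1 - ρ 1 j ^ 2, r - ρ 0 j * ρ 1 j;
          r - ρ 0 j * ρ 1 j, 1 - ρ 0 j ^ 2]).PosSemidef) :
    |ρ 0 0 * ρ 1 0 - ρ 0 1 * ρ 1 1| ≤
      Real.sqrt ((1 - ρ 0 0 ^ 2) * (1 - ρ 1 0 ^ 2)) +
        Real.sqrt ((1 - ρ 0 1 ^ 2) * (1 - ρ 1 1 ^ 2)) := by
  calc |ρ 0 0 * ρ 1 0 - ρ 0 1 * ρ 1 1|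
      ≤ |ρ 0 0 * ρ 1 0 - r| + |r - ρ 0 1 * ρ 1 1| := abs_sub_le _ _ _
    _ = |r - ρ 0 0 * ρ 1 0| + |r - ρ 0 1 * ρ 1 1| := by rw [abs_sub_comm]
    _ ≤ _ := add_le_add (h 0).abs_le_sqrt_mul_fin_two (h 1).abs_le_sqrt_mul_fin_two
end

section
/- Let Â₀, Â₁ be bounded self-adjoint operators on a complex Hilbert space and φ a unit vector. Then Var(Â₀)·Var(Â₁) ≥ (½⟨{Â₀,Â₁}⟩ - ⟨Â₀⟩⟨Â₁⟩)² + (1/(2i)·⟨[Â₀,Â₁]⟩)², where {X,Y} = XY + YX, [X,Y] = XY - YX, ⟨X̂⟩ = ⟨φ, X̂φ⟩ and Var(X̂) = ⟨X̂²⟩ - ⟨X̂⟩². -/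
/-!
Centre `Aᵢ φ` at its mean: for `ψᵢ = Aᵢ φ - ⟨Aᵢ⟩ φ`, `‖ψᵢ‖²` is the variance of `Aᵢ`, while
`⟪ψ₀, ψ₁⟫ = ⟨A₀ A₁⟩ - ⟨A₀⟩⟨A₁⟩` has the covariance term as real part and the commutator term as
imaginary part. The inequality is then `|⟪ψ₀, ψ₁⟫|² ≤ ‖ψ₀‖² ‖ψ₁‖²`.
-/

open scoped InnerProductSpace ComplexConjugate

theorem sq_re_inner_add_sq_im_inner_le {E : Type*} [SeminormedAddCommGroup E]
    [InnerProductSpace ℂ E] (x y : E) :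
    (⟪x, y⟫_ℂ).re ^ 2 + (⟪x, y⟫_ℂ).im ^ 2 ≤ ‖x‖ ^ 2 * ‖y‖ ^ 2 := by
  rw [← mul_pow, sq, sq, ← Complex.normSq_apply, ← Complex.sq_norm]
  exact pow_le_pow_left₀ (norm_nonneg _) (norm_inner_le_norm x y) 2

namespace LinearMap

variable {E : Type*} [SeminormedAddCommGroup E] [InnerProductSpace ℂ E]

def deviation (T : E →ₗ[ℂ] E) (x : E) : E := T x - ⟪x, T x⟫_ℂ • x

namespace IsSymmetric

variable {S T : E →ₗ[ℂ] E} {x : E}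

theorem complex_im_inner_self_apply (hT : T.IsSymmetric) (x : E) : (⟪x, T x⟫_ℂ).im = 0 :=
  hT.im_inner_self_apply x

theorem inner_apply_apply_swap (hS : S.IsSymmetric) (hT : T.IsSymmetric) (x : E) :
    ⟪x, T (S x)⟫_ℂ = conj ⟪x, S (T x)⟫_ℂ := by
  rw [inner_conj_symm, ← hT, hS]

theorem inner_deviation_deviation (hS : S.IsSymmetric) (T : E →ₗ[ℂ] E) (hx : ‖x‖ = 1) :
    ⟪S.deviation x, T.deviation x⟫_ℂ = ⟪x, S (T x)⟫_ℂ - ⟪x, S x⟫_ℂ * ⟪x, T x⟫_ℂ := by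
  have hxx : ⟪x, x⟫_ℂ = 1 := by simp [inner_self_eq_norm_sq_to_K, hx]
  have hSx : conj ⟪x, S x⟫_ℂ = ⟪x, S x⟫_ℂ :=
    Complex.conj_eq_iff_re.mpr (hS.coe_re_inner_self_apply x)
  simp only [deviation, inner_sub_left, inner_sub_right, inner_smul_left, inner_smul_right,
    hS _ (T x), hSx, hxx, hS x x]
  ring

theorem norm_deviation_sq (hT : T.IsSymmetric) (hx : ‖x‖ = 1) :
    ‖T.deviation x‖ ^ 2 = (⟪x, T (T x)⟫_ℂ).re - (⟪x, T x⟫_ℂ).re ^ 2 := by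
  rw [norm_sq_eq_re_inner (𝕜 := ℂ), hT.inner_deviation_deviation T hx]
  simp [Complex.mul_re, hT.complex_im_inner_self_apply x, sq]

theorem re_inner_deviation_deviation (hS : S.IsSymmetric) (hT : T.IsSymmetric) (hx : ‖x‖ = 1) :
    (⟪S.deviation x, T.deviation x⟫_ℂ).re =
      1 / 2 * (⟪x, S (T x) + T (S x)⟫_ℂ).re - (⟪x, S x⟫_ℂ).re * (⟪x, T x⟫_ℂ).re := by
  rw [hS.inner_deviation_deviation T hx, inner_add_right, hS.inner_apply_apply_swap hT,
    Complex.add_conj]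
  simp [Complex.mul_re, hS.complex_im_inner_self_apply x]

theorem im_inner_deviation_deviation (hS : S.IsSymmetric) (hT : T.IsSymmetric) (hx : ‖x‖ = 1) :
    (⟪S.deviation x, T.deviation x⟫_ℂ).im =
      (⟪x, S (T x) - T (S x)⟫_ℂ / (2 * Complex.I)).re := by
  rw [hS.inner_deviation_deviation T hx, inner_sub_right, hS.inner_apply_apply_swap hT,
    Complex.sub_conj]
  simp [Complex.mul_im, hS.complex_im_inner_self_apply x, hT.complex_im_inner_self_apply x,
    Complex.div_re]
  ring

end IsSymmetric

end LinearMap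

theorem stmt_5 {H : Type*} [NormedAddCommGroup H] [InnerProductSpace ℂ H] [CompleteSpace H]
    (A₀ A₁ : H →L[ℂ] H) (hA₀ : IsSelfAdjoint A₀) (hA₁ : IsSelfAdjoint A₁)
    (φ : H) (hφ : ‖φ‖ = 1) :
    ((inner ℂ φ ((A₀ * A₀) φ) : ℂ).re - ((inner ℂ φ (A₀ φ) : ℂ).re) ^ 2) *
      ((inner ℂ φ ((A₁ * A₁) φ) : ℂ).re - ((inner ℂ φ (A₁ φ) : ℂ).re) ^ 2) ≥
    ((1 / 2) * (inner ℂ φ ((A₀ * A₁ + A₁ * A₀) φ) : ℂ).re -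
        (inner ℂ φ (A₀ φ) : ℂ).re * (inner ℂ φ (A₁ φ) : ℂ).re) ^ 2 +
      (((inner ℂ φ ((A₀ * A₁ - A₁ * A₀) φ) : ℂ) / (2 * Complex.I)).re) ^ 2 := by
  have h₀ := hA₀.isSymmetric
  have h₁ := hA₁.isSymmetric
  have key := sq_re_inner_add_sq_im_inner_le
    ((A₀ : H →ₗ[ℂ] H).deviation φ) ((A₁ : H →ₗ[ℂ] H).deviation φ)
  rwa [h₀.re_inner_deviation_deviation h₁ hφ, h₀.im_inner_deviation_deviation h₁ hφ,
    h₀.norm_deviation_sq hφ, h₁.norm_deviation_sq hφ] at key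
end

section
/- Suppose real numbers r', ρ^{AB}_{ij}, ρ^{AC}_{ik} (i, j, k ∈ {0,1}) satisfy, for every j, k ∈ {0,1}, that the 2×2 matrix [[1, r'],[r', 1]] minus M_{jk}M_{jk}^T is positive semidefinite, where M_{jk} = [[ρ^{AC}_{1k}, ρ^{AB}_{1j}],[ρ^{AC}_{0k}, ρ^{AB}_{0j}]]. Then B_{AB}² + B_{AC}² ≤ 8, where B_{AB} = ρ^{AB}_{00} + ρ^{AB}_{10} + ρ^{AB}_{01} - ρ^{AB}_{11} and B_{AC} = ρ^{AC}_{00} + ρ^{AC}_{10} + ρ^{AC}_{01} - ρ^{AC}_{11}. -/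
/-!
Testing the positive semidefinite matrix `[[1, r'], [r', 1]] - M Mᵀ` against `(1, ±1)` turns each
condition into a bound on a sum of two squares: for `j = k = 0` the vector `(1, 1)` gives
`(ρAB₀₀ + ρAB₁₀)² + (ρAC₀₀ + ρAC₁₀)² ≤ 2 + 2r'`, and for `j = k = 1` the vector `(1, -1)` gives
`(ρAB₀₁ - ρAB₁₁)² + (ρAC₀₁ - ρAC₁₁)² ≤ 2 - 2r'`. The common `r'` cancels when the two are added,
and `(x + y)² ≤ 2(x² + y²)` applied to both Bell expressions finishes the proof.
-/

open Matrix

lemma Matrix.PosSemidef.dotProduct_transpose_mulVec_le {m n R : Type*} [Fintype m] [Fintype n]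
    [CommRing R] [PartialOrder R] [IsOrderedAddMonoid R] [StarRing R] [TrivialStar R]
    {A : Matrix m m R} {B : Matrix m n R} (h : (A - B * Bᵀ).PosSemidef) (x : m → R) :
    Bᵀ *ᵥ x ⬝ᵥ Bᵀ *ᵥ x ≤ x ⬝ᵥ A *ᵥ x := by
  have := h.dotProduct_mulVec_nonneg x
  rwa [star_trivial, sub_mulVec, dotProduct_sub, ← mulVec_mulVec, dotProduct_mulVec x B,
    ← mulVec_transpose, sub_nonneg] at this

lemma sq_add_sq_le_of_posSemidef (a b c d r s : ℝ)
    (h : (!![1, r; r, 1] - !![a, b; c, d] * (!![a, b; c, d])ᵀ).PosSemidef) :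
    (a + s * c) ^ 2 + (b + s * d) ^ 2 ≤ 1 + 2 * s * r + s ^ 2 := by
  have := h.dotProduct_transpose_mulVec_le ![1, s]
  simp only [transpose_apply, mulVec, dotProduct, Fin.sum_univ_two, of_apply, cons_val',
    cons_val_zero, cons_val_one, empty_val', cons_val_fin_one] at this
  linarith

theorem stmt_9 (ρAB ρAC : Fin 2 → Fin 2 → ℝ) (r' : ℝ)
    (h : ∀ j k : Fin 2,
      (!![(1 : ℝ), r'; r', 1] -
        !![ρAC 1 k, ρAB 1 j; ρAC 0 k, ρAB 0 j] *
          Matrix.transpose !![ρAC 1 k, ρAB 1 j; ρAC 0 k, ρAB 0 j]).PosSemidef) :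
    (ρAB 0 0 + ρAB 1 0 + ρAB 0 1 - ρAB 1 1) ^ 2 +
      (ρAC 0 0 + ρAC 1 0 + ρAC 0 1 - ρAC 1 1) ^ 2 ≤ 8 := by
  have h₀ := sq_add_sq_le_of_posSemidef _ _ _ _ _ 1 (h 0 0)
  have h₁ := sq_add_sq_le_of_posSemidef _ _ _ _ _ (-1) (h 1 1)
  nlinarith [sq_nonneg (ρAB 0 0 + ρAB 1 0 - ρAB 0 1 + ρAB 1 1),
    sq_nonneg (ρAC 0 0 + ρAC 1 0 - ρAC 0 1 + ρAC 1 1)]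
end

section
/- Let n ≥ 1 and suppose real numbers r' and ρˢ_{i,m} (s = 1,…,n; i ∈ {0,1}; m ranging over device choices) satisfy: for any choice (m₁,…,m_n), the matrix [[1, r'],[r', 1]] - Σ_{s=1}^n v_s v_s^T is positive semidefinite, where v_s = (ρˢ_{0,m_s}, ρˢ_{1,m_s}). Then for any two choices (i₁,…,i_n) and (j₁,…,j_n), defining B_s = ρˢ_{0,i_s} + ρˢ_{1,i_s} + ρˢ_{0,j_s} - ρˢ_{1,j_s}, one has Σ_{s=1}^n |B_s| ≤ √(2n)(√(1+r') + √(1-r')) ≤ 2√(2n). -/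
/-!
Testing the positive semidefinite matrix against `x = (1, 1)` and `x = (1, -1)` gives
`∑ (ρ₀ + ρ₁)² ≤ 2 (1 + r')` and `∑ (ρ₀ - ρ₁)² ≤ 2 (1 - r')` for every choice of settings; in
particular `|r'| ≤ 1`. Splitting each `B_s` by the triangle inequality and applying
Cauchy–Schwarz, `∑ |f_s| ≤ √n · √(∑ f_s²)`, to both halves gives the first bound, and
`√(1 + r') + √(1 - r') ≤ 2` by concavity of the square root gives the second.
-/
open Matrix Finset

lemma Matrix.PosSemidef.sum_sq_dotProduct_le {m ι : Type*} [Fintype m] [Fintype ι]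
    {A : Matrix m m ℝ} {v : ι → m → ℝ}
    (h : (A - ∑ s, vecMulVec (v s) (v s)).PosSemidef) (x : m → ℝ) :
    ∑ s, (v s ⬝ᵥ x) ^ 2 ≤ x ⬝ᵥ A *ᵥ x := by
  have := h.dotProduct_mulVec_nonneg x
  simp only [star_trivial, sub_mulVec, sum_mulVec, vecMulVec_mulVec, dotProduct_sub,
    dotProduct_sum, op_smul_eq_smul, dotProduct_smul, smul_eq_mul] at this
  simpa [sq, dotProduct_comm x] using this

lemma sum_sq_add_mul_le_of_posSemidef {ι : Type*} [Fintype ι] {r : ℝ} {a b : ι → ℝ}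
    (h : (!![1, r; r, 1] - ∑ s, vecMulVec ![a s, b s] ![a s, b s]).PosSemidef) (x y : ℝ) :
    ∑ s, (x * a s + y * b s) ^ 2 ≤ x ^ 2 + 2 * r * x * y + y ^ 2 := by
  have := h.sum_sq_dotProduct_le ![x, y]
  simp only [dotProduct, Fin.sum_univ_two, mulVec, of_apply, cons_val', cons_val_zero,
    cons_val_one, cons_val_fin_one] at this
  convert this using 1
  · congr! 2 with s; ring
  · ring

lemma sum_abs_le_sqrt_card_mul_sqrt_sum_sq {ι : Type*} [Fintype ι] (f : ι → ℝ) :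
    ∑ s, |f s| ≤ √(Fintype.card ι) * √(∑ s, f s ^ 2) := by
  rw [← Real.sqrt_mul (Nat.cast_nonneg _)]
  apply Real.le_sqrt_of_sq_le
  simpa [sq_abs] using sq_sum_le_card_mul_sum_sq (s := univ) (f := fun s => |f s|)

lemma Real.sqrt_one_add_add_sqrt_one_sub_le_two {r : ℝ} (h₁ : -1 ≤ r) (h₂ : r ≤ 1) :
    √(1 + r) + √(1 - r) ≤ 2 := by
  have hp := Real.sq_sqrt (show 0 ≤ 1 + r by linarith)
  have hm := Real.sq_sqrt (show 0 ≤ 1 - r by linarith)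
  nlinarith [sq_nonneg (√(1 + r) - √(1 - r)), Real.sqrt_nonneg (1 + r), Real.sqrt_nonneg (1 - r)]

theorem stmt_11_general (n : ℕ) (r' : ℝ) (ρ : Fin n → Fin 2 → ℕ → ℝ)
    (h : ∀ c : Fin n → ℕ,
      (!![(1 : ℝ), r'; r', 1] -
        ∑ s : Fin n, Matrix.vecMulVec ![ρ s 0 (c s), ρ s 1 (c s)]
          ![ρ s 0 (c s), ρ s 1 (c s)]).PosSemidef)
    (i j : Fin n → ℕ) :
    (∑ s : Fin n, |ρ s 0 (i s) + ρ s 1 (i s) + ρ s 0 (j s) - ρ s 1 (j s)|) ≤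
        Real.sqrt (2 * n) * (Real.sqrt (1 + r') + Real.sqrt (1 - r')) ∧
      Real.sqrt (2 * n) * (Real.sqrt (1 + r') + Real.sqrt (1 - r')) ≤
        2 * Real.sqrt (2 * n) := by
  set a : Fin n → ℝ := fun s ↦ ρ s 0 (i s) + ρ s 1 (i s)
  set b : Fin n → ℝ := fun s ↦ ρ s 0 (j s) - ρ s 1 (j s)
  have ha : ∑ s, a s ^ 2 ≤ 2 * (1 + r') := by
    have := sum_sq_add_mul_le_of_posSemidef (h i) 1 1
    simp only [one_mul] at this
    linarith
  have hb : ∑ s, b s ^ 2 ≤ 2 * (1 - r') := by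
    have := sum_sq_add_mul_le_of_posSemidef (h j) 1 (-1)
    simp only [one_mul, neg_one_mul, ← sub_eq_add_neg] at this
    linarith
  have hr₁ : -1 ≤ r' := by nlinarith [sum_nonneg fun s (_ : s ∈ univ) ↦ sq_nonneg (a s)]
  have hr₂ : r' ≤ 1 := by nlinarith [sum_nonneg fun s (_ : s ∈ univ) ↦ sq_nonneg (b s)]
  have hsqrt : ∀ t, √(2 * n) * √t = √n * √(2 * t) := fun t ↦ by
    rw [← Real.sqrt_mul (by positivity), ← Real.sqrt_mul (by positivity)]; ring_nf
  constructor
  · calc ∑ s, |ρ s 0 (i s) + ρ s 1 (i s) + ρ s 0 (j s) - ρ s 1 (j s)|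
        = ∑ s, |a s + b s| := by simp only [a, b, add_sub_assoc]
      _ ≤ ∑ s, |a s| + ∑ s, |b s| := by rw [← sum_add_distrib]; gcongr; exact abs_add_le _ _
      _ ≤ √n * √(∑ s, a s ^ 2) + √n * √(∑ s, b s ^ 2) := by
        simpa using add_le_add (sum_abs_le_sqrt_card_mul_sqrt_sum_sq a)
          (sum_abs_le_sqrt_card_mul_sqrt_sum_sq b)
      _ ≤ √n * √(2 * (1 + r')) + √n * √(2 * (1 - r')) := by gcongr
      _ = √(2 * n) * (√(1 + r') + √(1 - r')) := by rw [← hsqrt, ← hsqrt, ← mul_add]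
  · rw [mul_comm 2 √_]
    gcongr
    exact Real.sqrt_one_add_add_sqrt_one_sub_le_two hr₁ hr₂

theorem stmt_11 (n : ℕ) (hn : 1 ≤ n) (r' : ℝ) (ρ : Fin n → Fin 2 → ℕ → ℝ)
    (h : ∀ c : Fin n → ℕ,
      (!![(1 : ℝ), r'; r', 1] -
        ∑ s : Fin n, Matrix.vecMulVec ![ρ s 0 (c s), ρ s 1 (c s)]
          ![ρ s 0 (c s), ρ s 1 (c s)]).PosSemidef)
    (i j : Fin n → ℕ) :
    (∑ s : Fin n, |ρ s 0 (i s) + ρ s 1 (i s) + ρ s 0 (j s) - ρ s 1 (j s)|) ≤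
        Real.sqrt (2 * n) * (Real.sqrt (1 + r') + Real.sqrt (1 - r')) ∧
      Real.sqrt (2 * n) * (Real.sqrt (1 + r') + Real.sqrt (1 - r')) ≤
        2 * Real.sqrt (2 * n) :=
  stmt_11_general n r' ρ h i j
end

section
/- Let ρ^{AB}_{1j}, ρ^{AB}_{0j}, ρ^{AC}_{1k}, ρ^{AC}_{0k}, r' be real numbers with the matrix [[1, r'],[r', 1]] - M M^T positive semidefinite for M = [[ρ^{AC}_{1k}, ρ^{AB}_{1j}],[ρ^{AC}_{0k}, ρ^{AB}_{0j}]]. Then |r' - ρ^{AB}_{0j}ρ^{AB}_{1j} - ρ^{AC}_{0k}ρ^{AC}_{1k}| ≤ √((1 - (ρ^{AB}_{0j})² - (ρ^{AC}_{0k})²)(1 - (ρ^{AB}_{1j})² - (ρ^{AC}_{1k})²)). -/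
/-!
Subtracting `M Mᵀ` leaves the symmetric matrix `!![a, b; b, c]` with `a = 1 - ρAB₁² - ρAC₁²`,
`b = r' - ρAB₀ ρAB₁ - ρAC₀ ρAC₁`, `c = 1 - ρAB₀² - ρAC₀²`. Its determinant `a c - b²` is
nonnegative, and taking square roots gives the interval constraint on `r'`.
-/

theorem Matrix.PosSemidef.sq_le_mul_of_fin_two {a b c : ℝ} (h : (!![a, b; b, c]).PosSemidef) :
    b ^ 2 ≤ a * c := by
  have hdet := h.det_nonneg
  rw [Matrix.det_fin_two_of] at hdet
  linarith

theorem Matrix.one_sub_mul_transpose_fin_two {R : Type*} [CommRing R] (r p q s t : R) :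
    !![1, r; r, 1] - !![p, q; s, t] * Matrix.transpose !![p, q; s, t] =
      !![1 - q ^ 2 - p ^ 2, r - t * q - s * p; r - t * q - s * p, 1 - t ^ 2 - s ^ 2] := by
  ext i j
  fin_cases i <;> fin_cases j <;> simp [Matrix.vecMul, dotProduct] <;> ring

theorem stmt_13 (ρAB₁ ρAB₀ ρAC₁ ρAC₀ r' : ℝ)
    (h : (!![(1 : ℝ), r'; r', 1] -
      !![ρAC₁, ρAB₁; ρAC₀, ρAB₀] * Matrix.transpose !![ρAC₁, ρAB₁; ρAC₀, ρAB₀]).PosSemidef) :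
    |r' - ρAB₀ * ρAB₁ - ρAC₀ * ρAC₁| ≤
      Real.sqrt ((1 - ρAB₀ ^ 2 - ρAC₀ ^ 2) * (1 - ρAB₁ ^ 2 - ρAC₁ ^ 2)) := by
  rw [Matrix.one_sub_mul_transpose_fin_two] at h
  exact Real.abs_le_sqrt (by linarith [h.sq_le_mul_of_fin_two])
end

section
/- There exists no real number r such that for both k = 0 and k = 1 the 4×4 symmetric matrix [[1, 0, ρ₁, ρ₀],[0, 1, 1, (-1)ᵏ],[ρ₁, 1, 1, r],[ρ₀, (-1)ᵏ, r, 1]] is positive semidefinite, for any real ρ₀, ρ₁; moreover, positive semidefiniteness for a fixed k forces ρ₀ = ρ₁ = 0 and r = (-1)ᵏ. -/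
/-!
In a positive semidefinite matrix with unit diagonal, a correlation `A i j = ±1` forces
`(±1) • eᵢ - eⱼ` to be an isotropic vector, hence to lie in the kernel, so column `j` is `±1` times
column `i`. For the covariance matrix of the PR box this applies to the pairs `(1, 2)` (correlation
`1`) and `(1, 3)` (correlation `(-1)ᵏ`), and comparing columns gives `ρ₁ = 0`, `r = (-1)ᵏ` and
`ρ₀ = 0`. Since `r` cannot equal both `1` and `-1`, no single `r` works for `k = 0` and `k = 1`.
-/

open Matrix

theorem Matrix.PosSemidef.apply_eq_mul_apply_of_correlation_sq_eq_one {n : Type*} [Fintype n]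
    {A : Matrix n n ℝ} (hA : A.PosSemidef) {i j : n} {ε : ℝ} (hε : ε ^ 2 = 1)
    (hii : A i i = 1) (hjj : A j j = 1) (hij : A i j = ε) (k : n) :
    A k j = ε * A k i := by
  classical
  have hji : A j i = ε := by simpa [hij] using (hA.isHermitian.apply j i).symm
  have hker : A *ᵥ (ε • Pi.single i 1 - Pi.single j 1) = 0 := by
    refine (hA.dotProduct_mulVec_zero_iff _).mp ?_
    simp only [star_trivial, mulVec_sub, mulVec_smul, mulVec_single, MulOpposite.op_one, one_smul,
      dotProduct_sub, dotProduct_smul, sub_dotProduct, smul_dotProduct, single_dotProduct,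
      col_apply, smul_eq_mul, hii, hjj, hij, hji]
    linear_combination -hε
  simpa [mulVec_sub, mulVec_smul, sub_eq_zero, eq_comm] using congrFun hker k

theorem eq_of_posSemidef_prBox_covariance {ρ₀ ρ₁ r ε : ℝ} (hε : ε ^ 2 = 1)
    (hA : (!![(1 : ℝ), 0, ρ₁, ρ₀;
          0, 1, 1, ε;
          ρ₁, 1, 1, r;
          ρ₀, ε, r, 1]).PosSemidef) :
    ρ₀ = 0 ∧ ρ₁ = 0 ∧ r = ε := by
  have h₁₂ := hA.apply_eq_mul_apply_of_correlation_sq_eq_one (i := 1) (j := 2) (one_pow 2)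
    rfl rfl rfl
  have h₁₃ := hA.apply_eq_mul_apply_of_correlation_sq_eq_one (i := 1) (j := 3) hε rfl rfl rfl
  exact ⟨by simpa using h₁₃ 0, by simpa using h₁₂ 0, by simpa using h₁₂ 3⟩

theorem stmt_14 :
    (∀ ρ₀ ρ₁ : ℝ, ¬ ∃ r : ℝ, ∀ k : Fin 2,
      (!![(1 : ℝ), 0, ρ₁, ρ₀;
          0, 1, 1, (-1 : ℝ) ^ (k : ℕ);
          ρ₁, 1, 1, r;
          ρ₀, (-1 : ℝ) ^ (k : ℕ), r, 1]).PosSemidef) ∧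
    (∀ ρ₀ ρ₁ r : ℝ, ∀ k : Fin 2,
      (!![(1 : ℝ), 0, ρ₁, ρ₀;
          0, 1, 1, (-1 : ℝ) ^ (k : ℕ);
          ρ₁, 1, 1, r;
          ρ₀, (-1 : ℝ) ^ (k : ℕ), r, 1]).PosSemidef →
        ρ₀ = 0 ∧ ρ₁ = 0 ∧ r = (-1 : ℝ) ^ (k : ℕ)) := by
  have hsq (k : Fin 2) : ((-1 : ℝ) ^ (k : ℕ)) ^ 2 = 1 := by
    rw [← pow_mul, mul_comm, pow_mul, neg_one_sq, one_pow]
  refine ⟨fun ρ₀ ρ₁ ⟨r, hr⟩ ↦ ?_, fun ρ₀ ρ₁ r k hk ↦ eq_of_posSemidef_prBox_covariance (hsq k) hk⟩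
  have hr₀ : r = 1 := by simpa using (eq_of_posSemidef_prBox_covariance (hsq 0) (hr 0)).2.2
  have hr₁ : r = -1 := by simpa using (eq_of_posSemidef_prBox_covariance (hsq 1) (hr 1)).2.2
  linarith
end

section
/- Let Â₀, Â₁ be bounded self-adjoint operators and D̂ = Âᵢᵐ a power of one of them, φ a unit vector, with Var(D̂) > 0. Then Var(Â₀) + Var(Â₁) ≥ 2|½⟨{Â₁,Â₀}⟩ - ⟨Â₁⟩⟨Â₀⟩| + (1/Var(D̂))·|Cov(Â₁, D̂) ± Cov(Â₀, D̂)|² for an appropriate choice of sign, where Cov(X̂, Ŷ) = Re(⟨X̂Ŷ⟩) - ⟨X̂⟩⟨Ŷ⟩ arranged so the stated 3×3 covariance matrix of (D̂, Â₁, Â₀) is PSD. -/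
noncomputable def qExp' {H : Type*} [NormedAddCommGroup H] [InnerProductSpace ℂ H]
    (φ : H) (X : H →L[ℂ] H) : ℝ := (inner ℂ φ (X φ) : ℂ).re

noncomputable def qVar' {H : Type*} [NormedAddCommGroup H] [InnerProductSpace ℂ H]
    (φ : H) (X : H →L[ℂ] H) : ℝ := qExp' φ (X * X) - (qExp' φ X) ^ 2

noncomputable def qCov' {H : Type*} [NormedAddCommGroup H] [InnerProductSpace ℂ H]
    (φ : H) (X Y : H →L[ℂ] H) : ℝ := qExp' φ (X * Y) - qExp' φ X * qExp' φ Y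

/-!
Writing `δX = Xφ - ⟨X⟩φ` for the deviation vector of an observable, every covariance is the real
part of an inner product of deviation vectors, `Cov(X, Y) = Re ⟪δX, δY⟫`, and `Var X = ‖δX‖²`.
With `a = δA₁`, `b = δA₀`, `d = δD` and the sign `ε` opposite to that of `Re ⟪a, b⟫`, one has
`‖a + εb‖² = ‖a‖² + ‖b‖² - 2|Re ⟪a, b⟫|`, and Cauchy–Schwarz for `a + εb` against `d` gives the
inequality. This is the positive semidefiniteness of the Gram matrix of `(d, a, b)` evaluated
through its Schur complement at `(1, ε)`.
-/

open RCLike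
open scoped InnerProductSpace

section InnerProduct

variable {𝕜 E : Type*} [RCLike 𝕜] [NormedAddCommGroup E] [InnerProductSpace 𝕜 E]

theorem exists_sign_norm_add_smul_sq (a b : E) :
    ∃ ε : ℝ, (ε = 1 ∨ ε = -1) ∧
      ‖a + (ε : 𝕜) • b‖ ^ 2 = ‖a‖ ^ 2 + ‖b‖ ^ 2 - 2 * |re ⟪a, b⟫_𝕜| := by
  rcases le_total 0 (re ⟪a, b⟫_𝕜) with hab | hab
  · refine ⟨-1, Or.inr rfl, ?_⟩
    rw [ofReal_neg, ofReal_one, neg_one_smul, ← sub_eq_add_neg, norm_sub_sq (𝕜 := 𝕜),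
      abs_of_nonneg hab]
    ring
  · refine ⟨1, Or.inl rfl, ?_⟩
    rw [ofReal_one, one_smul, norm_add_sq (𝕜 := 𝕜), abs_of_nonpos hab]
    ring

theorem sq_re_inner_le_norm_sq_mul_norm_sq (x y : E) :
    re ⟪x, y⟫_𝕜 ^ 2 ≤ ‖x‖ ^ 2 * ‖y‖ ^ 2 := by
  rw [← mul_pow, ← sq_abs]
  exact pow_le_pow_left₀ (abs_nonneg _) ((abs_re_le_norm _).trans (norm_inner_le_norm x y)) 2

theorem exists_sign_two_mul_abs_re_inner_add_sq_div_le (a b d : E) :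
    ∃ ε : ℝ, (ε = 1 ∨ ε = -1) ∧
      2 * |re ⟪a, b⟫_𝕜| + (re ⟪a, d⟫_𝕜 + ε * re ⟪b, d⟫_𝕜) ^ 2 / ‖d‖ ^ 2 ≤ ‖a‖ ^ 2 + ‖b‖ ^ 2 := by
  obtain ⟨ε, hε, hnorm⟩ := exists_sign_norm_add_smul_sq (𝕜 := 𝕜) a b
  refine ⟨ε, hε, ?_⟩
  have hinner : re ⟪a + (ε : 𝕜) • b, d⟫_𝕜 = re ⟪a, d⟫_𝕜 + ε * re ⟪b, d⟫_𝕜 := by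
    rw [inner_add_left, inner_smul_left, conj_ofReal, map_add, re_ofReal_mul]
  have hcs := sq_re_inner_le_norm_sq_mul_norm_sq (𝕜 := 𝕜) (a + (ε : 𝕜) • b) d
  rw [hinner, hnorm] at hcs
  have hdiv := div_le_of_le_mul₀ (by positivity) (hnorm ▸ sq_nonneg _) hcs
  linarith

end InnerProduct

section Observables

variable {H : Type*} [NormedAddCommGroup H] [InnerProductSpace ℂ H]

noncomputable def qDeviation (φ : H) (X : H →L[ℂ] H) : H := X φ - (qExp' φ X : ℂ) • φ

theorem qExp'_add (φ : H) (X Y : H →L[ℂ] H) :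
    qExp' φ (X + Y) = qExp' φ X + qExp' φ Y := by
  simp only [qExp', add_apply, inner_add_right, Complex.add_re]

variable [CompleteSpace H]

theorem qExp'_mul_of_isSelfAdjoint (φ : H) {X : H →L[ℂ] H} (hX : IsSelfAdjoint X)
    (Y : H →L[ℂ] H) : qExp' φ (X * Y) = (inner ℂ (X φ) (Y φ)).re := by
  rw [qExp', mul_apply_eq_comp, ← ContinuousLinearMap.adjoint_inner_left, hX.adjoint_eq]

theorem qExp'_mul_comm_of_isSelfAdjoint (φ : H) {X Y : H →L[ℂ] H} (hX : IsSelfAdjoint X)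
    (hY : IsSelfAdjoint Y) : qExp' φ (Y * X) = qExp' φ (X * Y) := by
  rw [qExp'_mul_of_isSelfAdjoint φ hX, qExp'_mul_of_isSelfAdjoint φ hY]
  exact inner_re_symm (𝕜 := ℂ) _ _

theorem qCov'_eq_re_inner_qDeviation {φ : H} (hφ : ‖φ‖ = 1) {X : H →L[ℂ] H}
    (hX : IsSelfAdjoint X) (Y : H →L[ℂ] H) :
    qCov' φ X Y = (inner ℂ (qDeviation φ X) (qDeviation φ Y)).re := by
  have hφφ : inner ℂ φ φ = (1 : ℂ) := by
    rw [inner_self_eq_norm_sq_to_K, hφ]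
    norm_num
  have hXφ : (inner ℂ (X φ) φ).re = qExp' φ X := inner_re_symm (𝕜 := ℂ) _ _
  simp only [qDeviation, inner_sub_left, inner_sub_right, inner_smul_left, inner_smul_right,
    hφφ, Complex.conj_ofReal, Complex.sub_re, Complex.mul_re, Complex.ofReal_re,
    Complex.ofReal_im, hXφ, qCov', qExp'_mul_of_isSelfAdjoint φ hX]
  simp only [qExp', Complex.one_re, Complex.one_im]
  ring

theorem qVar'_eq_norm_qDeviation_sq {φ : H} (hφ : ‖φ‖ = 1) {X : H →L[ℂ] H}
    (hX : IsSelfAdjoint X) : qVar' φ X = ‖qDeviation φ X‖ ^ 2 := by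
  calc qVar' φ X = qCov' φ X X := by rw [qVar', qCov', sq]
    _ = (inner ℂ (qDeviation φ X) (qDeviation φ X)).re := qCov'_eq_re_inner_qDeviation hφ hX X
    _ = ‖qDeviation φ X‖ ^ 2 := inner_self_eq_norm_sq (𝕜 := ℂ) _

theorem half_qExp'_anticommutator_sub (φ : H) {X Y : H →L[ℂ] H} (hX : IsSelfAdjoint X)
    (hY : IsSelfAdjoint Y) :
    (1 / 2) * qExp' φ (X * Y + Y * X) - qExp' φ X * qExp' φ Y = qCov' φ X Y := by
  rw [qExp'_add, qExp'_mul_comm_of_isSelfAdjoint φ hX hY, qCov']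
  ring

end Observables

theorem stmt_16_general {H : Type*} [NormedAddCommGroup H] [InnerProductSpace ℂ H] [CompleteSpace H]
    (A : Fin 2 → (H →L[ℂ] H)) (hA : ∀ i, IsSelfAdjoint (A i))
    (i : Fin 2) (m : ℕ) (D : H →L[ℂ] H) (hD : D = (A i) ^ m)
    (φ : H) (hφ : ‖φ‖ = 1) :
    ∃ ε : ℝ, (ε = 1 ∨ ε = -1) ∧
      qVar' φ (A 0) + qVar' φ (A 1) ≥
        2 * |(1 / 2) * qExp' φ (A 1 * A 0 + A 0 * A 1) - qExp' φ (A 1) * qExp' φ (A 0)| +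
          (1 / qVar' φ D) * |qCov' φ (A 1) D + ε * qCov' φ (A 0) D| ^ 2 := by
  have hDsa : IsSelfAdjoint D := hD ▸ (hA i).pow m
  obtain ⟨ε, hε, hle⟩ := exists_sign_two_mul_abs_re_inner_add_sq_div_le (𝕜 := ℂ)
    (qDeviation φ (A 1)) (qDeviation φ (A 0)) (qDeviation φ D)
  refine ⟨ε, hε, ?_⟩
  rw [half_qExp'_anticommutator_sub φ (hA 1) (hA 0), qCov'_eq_re_inner_qDeviation hφ (hA 1),
    qCov'_eq_re_inner_qDeviation hφ (hA 1), qCov'_eq_re_inner_qDeviation hφ (hA 0),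
    qVar'_eq_norm_qDeviation_sq hφ (hA 0), qVar'_eq_norm_qDeviation_sq hφ (hA 1),
    qVar'_eq_norm_qDeviation_sq hφ hDsa, sq_abs, one_div_mul_eq_div]
  simp only [RCLike.re_to_complex] at hle
  linarith

theorem stmt_16 {H : Type*} [NormedAddCommGroup H] [InnerProductSpace ℂ H] [CompleteSpace H]
    (A : Fin 2 → (H →L[ℂ] H)) (hA : ∀ i, IsSelfAdjoint (A i))
    (i : Fin 2) (m : ℕ) (hm : 1 < m) (D : H →L[ℂ] H) (hD : D = (A i) ^ m)
    (φ : H) (hφ : ‖φ‖ = 1) (hVD : 0 < qVar' φ D) :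
    ∃ ε : ℝ, (ε = 1 ∨ ε = -1) ∧
      qVar' φ (A 0) + qVar' φ (A 1) ≥
        2 * |(1 / 2) * qExp' φ (A 1 * A 0 + A 0 * A 1) - qExp' φ (A 1) * qExp' φ (A 0)| +
          (1 / qVar' φ D) * |qCov' φ (A 1) D + ε * qCov' φ (A 0) D| ^ 2 :=
  stmt_16_general A hA i m D hD φ hφ
end

section
/- Let ρ^{AB}_{ij}, ρ^{AC}_{ik}, ρ^{BC}_{lk}, r' be real numbers such that for two pairs of choices (l,k) and (l',k') the 4×4 symmetric matrix with unit diagonal and entries ρ^{BC}, ρ^{AC}, ρ^{AB}, r' arranged as [[1, ρ^{BC}_{lk}, ρ^{AC}_{1k}, ρ^{AC}_{0k}],[ρ^{BC}_{lk}, 1, ρ^{AB}_{1l}, ρ^{AB}_{0l}],[ρ^{AC}_{1k}, ρ^{AB}_{1l}, 1, r'],[ρ^{AC}_{0k}, ρ^{AB}_{0l}, r', 1]] is positive semidefinite (same r' for both pairs), and (ρ^{BC}_{lk})² < 1, (ρ^{BC}_{l'k'})² < 1. Then |ζ₀₁(l,k) - ζ₀₁(l',k')| ≤ √((1 - ζ₁₁(l,k))(1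 - ζ₀₀(l,k))) + √((1 - ζ₁₁(l',k'))(1 - ζ₀₀(l',k'))), where ζᵢⱼ(l,k) = [ρ^{AC}_{ik}ρ^{AC}_{jk} - ρ^{BC}_{lk}ρ^{AB}_{il}ρ^{AC}_{jk} - ρ^{BC}_{lk}ρ^{AB}_{jl}ρ^{AC}_{ik} + ρ^{AB}_{il}ρ^{AB}_{jl}]/(1 - (ρ^{BC}_{lk})²). -/
/-!
The Schur complement of the positive definite block `!![1, ρBC; ρBC, 1]` in the positive
semidefinite 4×4 correlation matrix is the positive semidefinite matrix
`!![1 - ζ₁₁, r' - ζ₀₁; r' - ζ₀₁, 1 - ζ₀₀]`. Its determinant is nonnegative, so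
`|ζ₀₁ - r'| ≤ √((1 - ζ₁₁) (1 - ζ₀₀))` for each of the two pairs `(l, k)`, `(l', k')`, and the
triangle inequality through the common `r'` gives the bound.
-/

noncomputable def zeta (ρAB ρAC : Fin 2 → ℕ → ℝ) (ρBC : ℕ → ℕ → ℝ)
    (i j : Fin 2) (l k : ℕ) : ℝ :=
  (ρAC i k * ρAC j k - ρBC l k * ρAB i l * ρAC j k - ρBC l k * ρAB j l * ρAC i k +
    ρAB i l * ρAB j l) / (1 - (ρBC l k) ^ 2)

open Matrix

theorem Matrix.PosSemidef.sq_apply_zero_one_le {M : Matrix (Fin 2) (Fin 2) ℝ}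
    (hM : M.PosSemidef) : M 0 1 ^ 2 ≤ M 0 0 * M 1 1 := by
  have hdet := hM.det_nonneg
  have hsymm : M 1 0 = M 0 1 := by simpa using congr_fun (congr_fun hM.isHermitian 0) 1
  rw [det_fin_two, hsymm] at hdet
  linarith

theorem posDef_unitDiag_fin_two {ρ : ℝ} (hρ : ρ ^ 2 < 1) :
    (!![1, ρ; ρ, 1] : Matrix (Fin 2) (Fin 2) ℝ).PosDef := by
  refine .of_dotProduct_mulVec_pos ?_ fun x hx => ?_
  · ext i j; fin_cases i <;> fin_cases j <;> rfl
  · have hx' : x 0 ≠ 0 ∨ x 1 ≠ 0 := by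
      by_contra! h; exact hx (funext fun i => by fin_cases i <;> simp [h])
    simp only [dotProduct, Pi.star_apply, star_trivial, mulVec, of_apply, cons_val',
      cons_val_fin_one, Fin.sum_univ_two, cons_val_zero, cons_val_one, one_mul]
    rcases hx' with h | h
    · nlinarith [sq_pos_of_ne_zero h, sq_nonneg (x 1 + ρ * x 0)]
    · nlinarith [sq_pos_of_ne_zero h, sq_nonneg (x 0 + ρ * x 1)]

-- At `ρ ^ 2 = 1` both sides are `0`, since `⁻¹` sends singular matrices and `0 : ℝ` to `0`.
theorem inv_unitDiag_fin_two (ρ : ℝ) :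
    (!![1, ρ; ρ, 1] : Matrix (Fin 2) (Fin 2) ℝ)⁻¹ = (1 - ρ ^ 2)⁻¹ • !![1, -ρ; -ρ, 1] := by
  rw [inv_def, adjugate_fin_two, det_fin_two]
  simp [Ring.inverse_eq_inv', sq]

theorem posSemidef_schur_unitDiag {ρ c₁ c₀ b₁ b₀ r : ℝ} (hρ : ρ ^ 2 < 1)
    (h : !![1, ρ, c₁, c₀; ρ, 1, b₁, b₀; c₁, b₁, 1, r; c₀, b₀, r, 1].PosSemidef) :
    (!![1, r; r, 1] - !![c₁, c₀; b₁, b₀]ᵀ * !![1, ρ; ρ, 1]⁻¹ * !![c₁, c₀; b₁, b₀]).PosSemidef := by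
  have hA := posDef_unitDiag_fin_two hρ
  have := hA.isUnit.invertible
  have hblocks : !![1, ρ, c₁, c₀; ρ, 1, b₁, b₀; c₁, b₁, 1, r; c₀, b₀, r, 1] =
      (fromBlocks !![1, ρ; ρ, 1] !![c₁, c₀; b₁, b₀] !![c₁, c₀; b₁, b₀]ᴴ !![1, r; r, 1]).submatrix
        finSumFinEquiv.symm finSumFinEquiv.symm := by
    ext i j; fin_cases i <;> fin_cases j <;> rfl
  rw [hblocks, posSemidef_submatrix_equiv, PosDef.fromBlocks₁₁ _ _ hA] at h
  simpa using h

theorem schur_unitDiag_eq_zeta (ρAB ρAC : Fin 2 → ℕ → ℝ) (ρBC : ℕ → ℕ → ℝ) (r' : ℝ) (l k : ℕ) :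
    !![1, r'; r', 1] - !![ρAC 1 k, ρAC 0 k; ρAB 1 l, ρAB 0 l]ᵀ *
        !![1, ρBC l k; ρBC l k, 1]⁻¹ * !![ρAC 1 k, ρAC 0 k; ρAB 1 l, ρAB 0 l] =
      !![1 - zeta ρAB ρAC ρBC 1 1 l k, r' - zeta ρAB ρAC ρBC 0 1 l k;
        r' - zeta ρAB ρAC ρBC 0 1 l k, 1 - zeta ρAB ρAC ρBC 0 0 l k] := by
  rw [inv_unitDiag_fin_two]
  ext i j
  fin_cases i <;> fin_cases j <;>
    simp [zeta, mul_apply, Fin.sum_univ_two] <;> ring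

theorem abs_zeta_sub_le_sqrt (ρAB ρAC : Fin 2 → ℕ → ℝ) (ρBC : ℕ → ℕ → ℝ) (r' : ℝ) {l k : ℕ}
    (hρ : ρBC l k ^ 2 < 1)
    (h : !![(1 : ℝ), ρBC l k, ρAC 1 k, ρAC 0 k;
          ρBC l k, 1, ρAB 1 l, ρAB 0 l;
          ρAC 1 k, ρAB 1 l, 1, r';
          ρAC 0 k, ρAB 0 l, r', 1].PosSemidef) :
    |zeta ρAB ρAC ρBC 0 1 l k - r'| ≤
      √((1 - zeta ρAB ρAC ρBC 1 1 l k) * (1 - zeta ρAB ρAC ρBC 0 0 l k)) := by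
  have hS := posSemidef_schur_unitDiag hρ h
  rw [schur_unitDiag_eq_zeta] at hS
  rw [abs_sub_comm]
  simpa using Real.abs_le_sqrt hS.sq_apply_zero_one_le

theorem stmt_17 (ρAB ρAC : Fin 2 → ℕ → ℝ) (ρBC : ℕ → ℕ → ℝ) (r' : ℝ)
    (l k l' k' : ℕ)
    (hPSD : ∀ p : ℕ × ℕ, p = (l, k) ∨ p = (l', k') →
      (!![(1 : ℝ), ρBC p.1 p.2, ρAC 1 p.2, ρAC 0 p.2;
          ρBC p.1 p.2, 1, ρAB 1 p.1, ρAB 0 p.1;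
          ρAC 1 p.2, ρAB 1 p.1, 1, r';
          ρAC 0 p.2, ρAB 0 p.1, r', 1]).PosSemidef)
    (h1 : (ρBC l k) ^ 2 < 1) (h2 : (ρBC l' k') ^ 2 < 1) :
    |zeta ρAB ρAC ρBC 0 1 l k - zeta ρAB ρAC ρBC 0 1 l' k'| ≤
      Real.sqrt ((1 - zeta ρAB ρAC ρBC 1 1 l k) * (1 - zeta ρAB ρAC ρBC 0 0 l k)) +
        Real.sqrt ((1 - zeta ρAB ρAC ρBC 1 1 l' k') * (1 - zeta ρAB ρAC ρBC 0 0 l' k')) := by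
  have hlk := abs_zeta_sub_le_sqrt ρAB ρAC ρBC r' h1 (hPSD (l, k) (.inl rfl))
  have hlk' := abs_zeta_sub_le_sqrt ρAB ρAC ρBC r' h2 (hPSD (l', k') (.inr rfl))
  rw [abs_sub_comm] at hlk'
  exact (abs_sub_le _ r' _).trans (add_le_add hlk hlk')
end

section
/- Let ρᵢⱼ (i, j ∈ {0,1}) be real correlators, with all |ρᵢⱼ| ≤ 1, let r' be a real number, let N = [[1, r'],[r', 1]] and Rⱼ = (ρ₀ⱼ, ρ₁ⱼ)ᵀ, and suppose the 4×4 real symmetric matrix M^L = [[N - R₀R₀ᵀ, R₀R₁ᵀ],[R₁R₀ᵀ, N - R₁R₁ᵀ]] is positive semidefinite. If additionally |r'| ≤ 1, then the Bell-CHSH parameter B = ρ₀₀ + ρ₁₀ + ρ₀₁ - ρ₁₁ satisfies B² ≤ 4, i.e., |B| ≤ 2. -/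
theorem stmt_19 (ρ : Fin 2 → Fin 2 → ℝ) (r' : ℝ)
    (hρ : ∀ i j, |ρ i j| ≤ 1) (hr : |r'| ≤ 1)
    (h : (Matrix.fromBlocks
        (!![(1 : ℝ), r'; r', 1] - Matrix.vecMulVec ![ρ 0 0, ρ 1 0] ![ρ 0 0, ρ 1 0])
        (Matrix.vecMulVec ![ρ 0 0, ρ 1 0] ![ρ 0 1, ρ 1 1])
        (Matrix.vecMulVec ![ρ 0 1, ρ 1 1] ![ρ 0 0, ρ 1 0])
        (!![(1 : ℝ), r'; r', 1] - Matrix.vecMulVec ![ρ 0 1, ρ 1 1] ![ρ 0 1, ρ 1 1])).PosSemidef) :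
    (ρ 0 0 + ρ 1 0 + ρ 0 1 - ρ 1 1) ^ 2 ≤ 4 := by
  have key := h.dotProduct_mulVec_nonneg (Sum.elim ![(1:ℝ), 1] ![(-1:ℝ), 1])
  simp only [Matrix.fromBlocks_mulVec, dotProduct, Matrix.mulVec,
    Matrix.vecMulVec_apply, Matrix.sub_apply, Fintype.sum_sum_type,
    Fin.sum_univ_two, Sum.elim_inl, Sum.elim_inr, star_trivial,
    Matrix.cons_val_zero, Matrix.cons_val_one, Matrix.head_cons,
    Matrix.of_apply, Pi.add_apply, Sum.elim_inl, Sum.elim_inr] at key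
  norm_num [Matrix.vecHead, Matrix.vecTail, Matrix.cons_val_zero, Matrix.cons_val_one] at key
  nlinarith [key]
end
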